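/- arXiv:1207.1256 — 2 statements merged into one kernel-verified Lean document; each statement's English description precedes it below -/
import Mathlib

section
/- For every integer v ≥ 1 and every real x > 0, the matrix J(x) is invertible (equivalently, det J(x) ≠ 0). -/
/-!
Off the diagonal all entries of `J(x)` are equal, so `J(x) = a • 1 + c • 𝟙𝟙ᵀ` with
`a = F_{v+4}/F_v > 0`, and the matrix determinant lemma gives `det J(x) = a^(v-1) (a + v c)`,
where `a + v c = ((v+2) F_{v+4} F_v - v F_{v+2}²) / (2 F_v²)`. Since `Γ(s+1) = s Γ(s)`,
`F_{v+2}` and `F_{v+4}` are, up to explicit constants, the first and second moments on `(0, x)`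
of the kernel `f(t) = t^(v/2-1) e^(-t/2)` of `F_v`, and the numerator becomes
`(∫ f)(∫ t² f) - (∫ t f)²`. This is positive because it is `∫ f` times the variance
`∫ (t - m)² f` of `f` about its mean `m`, and `f > 0` on `(0, x)`.
-/

open Real

/-- Chi-squared cumulative distribution function with `ν` degrees of freedom. -/
noncomputable def chiCDF (ν x : ℝ) : ℝ :=
  ((2 : ℝ) ^ (ν / 2) * Real.Gamma (ν / 2))⁻¹ *
    ∫ t in (0 : ℝ)..x, t ^ (ν / 2 - 1) * Real.exp (-t / 2)

/-- The `v×v` matrix `J(x)` with entries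
`J_{kj}(x) = (1/2)·[(1 + 2δ_{kj})·F_{v+4}(x)/F_v(x) − F_{v+2}(x)²/F_v(x)²]`. -/
noncomputable def Jmat (v : ℕ) (x : ℝ) : Matrix (Fin v) (Fin v) ℝ :=
  Matrix.of fun k j =>
    (1 / 2) * ((1 + 2 * (if k = j then (1 : ℝ) else 0)) * chiCDF (v + 4) x / chiCDF v x
      - (chiCDF (v + 2) x) ^ 2 / (chiCDF v x) ^ 2)

open MeasureTheory Set Matrix

namespace intervalIntegral

variable {f : ℝ → ℝ} {a b : ℝ}

theorem integral_sq_sub_mul_pos (hab : a < b) (hf : IntervalIntegrable f volume a b)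
    (hpos : ∀ t ∈ Ioo a b, 0 < f t) (m : ℝ) : 0 < ∫ t in a..b, (t - m) ^ 2 * f t := by
  have hnonneg : 0 ≤ᵐ[volume.restrict (uIoc a b)] fun t => (t - m) ^ 2 * f t := by
    rw [Filter.EventuallyLE, uIoc_of_le hab.le]
    refine ae_restrict_of_ae_eq_of_ae_restrict Ioo_ae_eq_Ioc ?_
    rw [ae_restrict_iff' measurableSet_Ioo]
    filter_upwards with t ht using mul_nonneg (sq_nonneg _) (hpos t ht).le
  have hsupp : Ioo a b \ {m} ⊆ Function.support (fun t => (t - m) ^ 2 * f t) ∩ Ioc a b :=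
    fun t ⟨ht, htm⟩ =>
      ⟨(mul_pos (pow_two_pos_of_ne_zero (sub_ne_zero.2 htm)) (hpos t ht)).ne',
        Ioo_subset_Ioc_self ht⟩
  rw [integral_pos_iff_support_of_nonneg_ae' hnonneg (hf.continuousOn_mul (by fun_prop))]
  refine ⟨hab, ?_⟩
  calc 0 < volume (Ioo a b \ {m}) := by
        rw [measure_sdiff_null (measure_singleton m)]
        exact (Measure.measure_Ioo_pos _).2 hab
    _ ≤ _ := measure_mono hsupp

theorem sq_integral_mul_lt_integral_mul_integral_sq_mul (hab : a < b)
    (hf : IntervalIntegrable f volume a b) (hpos : ∀ t ∈ Ioo a b, 0 < f t) :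
    (∫ t in a..b, t * f t) ^ 2 < (∫ t in a..b, f t) * ∫ t in a..b, t ^ 2 * f t := by
  have hf₁ : IntervalIntegrable (fun t => t * f t) volume a b :=
    hf.continuousOn_mul continuousOn_id
  have hf₂ : IntervalIntegrable (fun t => t ^ 2 * f t) volume a b :=
    hf.continuousOn_mul (continuousOn_id.pow 2)
  set I₀ := ∫ t in a..b, f t
  set I₁ := ∫ t in a..b, t * f t
  set I₂ := ∫ t in a..b, t ^ 2 * f t
  have hI₀ : 0 < I₀ := intervalIntegral_pos_of_pos_on hf hpos hab
  set m := I₁ / I₀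
  have hvar := integral_sq_sub_mul_pos hab hf hpos m
  have hexpand : ∫ t in a..b, (t - m) ^ 2 * f t = I₂ - 2 * m * I₁ + m ^ 2 * I₀ := by
    have hintegrand : (fun t => (t - m) ^ 2 * f t)
        = fun t => t ^ 2 * f t - 2 * m * (t * f t) + m ^ 2 * f t := by
      funext t; ring
    rw [hintegrand, integral_add (hf₂.sub (hf₁.const_mul _)) (hf.const_mul _),
      integral_sub hf₂ (hf₁.const_mul _), integral_const_mul, integral_const_mul]
  have hI₀var : I₀ * (I₂ - 2 * m * I₁ + m ^ 2 * I₀) = I₀ * I₂ - I₁ ^ 2 := by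
    simp only [m]; field_simp; ring
  linarith [mul_pos hI₀ (hexpand ▸ hvar)]

end intervalIntegral

theorem Matrix.det_smul_one_add_of_const {n K : Type*} [Fintype n] [DecidableEq n] [Nonempty n]
    [Field K] {a : K} (ha : a ≠ 0) (c : K) :
    (a • 1 + of fun _ _ : n => c).det = a ^ (Fintype.card n - 1) * (a + Fintype.card n * c) := by
  have hrank_one : a • 1 + of (fun _ _ : n => c) = a • (1 +
      replicateCol Unit (fun _ : n => c / a) * replicateRow Unit (fun _ : n => (1 : K))) := by
    ext i j
    simp [mul_apply, mul_add, mul_div_cancel₀ _ ha]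
  obtain ⟨k, hk⟩ := Nat.exists_eq_add_one_of_ne_zero (Fintype.card_ne_zero (α := n))
  rw [hrank_one, det_smul, det_one_add_replicateCol_mul_replicateRow, hk, Nat.add_sub_cancel]
  simp only [dotProduct, one_mul, Finset.sum_const, Finset.card_univ, hk, nsmul_eq_mul]
  field_simp
  ring

noncomputable def chiKernel (ν t : ℝ) : ℝ := t ^ (ν / 2 - 1) * exp (-t / 2)

noncomputable def chiNormalizer (ν : ℝ) : ℝ := 2 ^ (ν / 2) * Gamma (ν / 2)

theorem chiCDF_eq (ν x : ℝ) :
    chiCDF ν x = (chiNormalizer ν)⁻¹ * ∫ t in (0 : ℝ)..x, chiKernel ν t := rfl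

theorem chiNormalizer_pos {ν : ℝ} (hν : 0 < ν) : 0 < chiNormalizer ν :=
  mul_pos (rpow_pos_of_pos two_pos _) (Gamma_pos_of_pos (half_pos hν))

theorem chiNormalizer_add_two {ν : ℝ} (hν : 0 < ν) :
    chiNormalizer (ν + 2) = ν * chiNormalizer ν := by
  have hs : ν / 2 ≠ 0 := (half_pos hν).ne'
  rw [chiNormalizer, chiNormalizer, add_div, div_self two_ne_zero, rpow_add_one two_ne_zero,
    Gamma_add_one hs]
  ring

theorem chiKernel_add_two {ν : ℝ} (hν : 0 < ν) (t : ℝ) :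
    chiKernel (ν + 2) t = t * chiKernel ν t := by
  rcases eq_or_ne t 0 with rfl | ht
  · simp [chiKernel, zero_rpow (by linarith : (ν + 2) / 2 - 1 ≠ 0)]
  · rw [chiKernel, chiKernel, show (ν + 2) / 2 - 1 = ν / 2 - 1 + 1 by ring, rpow_add_one ht]
    ring

theorem intervalIntegrable_chiKernel {ν : ℝ} (hν : 0 < ν) (a b : ℝ) :
    IntervalIntegrable (chiKernel ν) volume a b :=
  (intervalIntegral.intervalIntegrable_rpow' (by linarith)).mul_continuousOn (by fun_prop)

theorem chiKernel_pos (ν : ℝ) {t : ℝ} (ht : 0 < t) : 0 < chiKernel ν t :=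
  mul_pos (rpow_pos_of_pos ht _) (exp_pos _)

theorem chiCDF_pos {ν x : ℝ} (hν : 0 < ν) (hx : 0 < x) : 0 < chiCDF ν x :=
  mul_pos (inv_pos.2 (chiNormalizer_pos hν)) <|
    intervalIntegral.intervalIntegral_pos_of_pos_on (intervalIntegrable_chiKernel hν 0 x)
      (fun _ ht => chiKernel_pos ν ht.1) hx

theorem chiCDF_add_two {ν : ℝ} (hν : 0 < ν) (x : ℝ) :
    chiCDF (ν + 2) x =
      (ν * chiNormalizer ν)⁻¹ * ∫ t in (0 : ℝ)..x, t * chiKernel ν t := by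
  simp only [chiCDF_eq, chiNormalizer_add_two hν, chiKernel_add_two hν]

theorem chiCDF_add_four {ν : ℝ} (hν : 0 < ν) (x : ℝ) :
    chiCDF (ν + 4) x =
      ((ν + 2) * ν * chiNormalizer ν)⁻¹ * ∫ t in (0 : ℝ)..x, t ^ 2 * chiKernel ν t := by
  simp only [show ν + 4 = ν + 2 + 2 by ring, chiCDF_add_two (by linarith : 0 < ν + 2),
    chiNormalizer_add_two hν, chiKernel_add_two hν, ← mul_assoc, ← sq]

theorem chiCDF_sq_lt {ν x : ℝ} (hν : 0 < ν) (hx : 0 < x) :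
    ν * chiCDF (ν + 2) x ^ 2 < (ν + 2) * chiCDF (ν + 4) x * chiCDF ν x := by
  have hN := chiNormalizer_pos hν
  have hI := intervalIntegral.sq_integral_mul_lt_integral_mul_integral_sq_mul hx
    (intervalIntegrable_chiKernel hν 0 x) fun _ ht => chiKernel_pos ν ht.1
  rw [chiCDF_add_two hν, chiCDF_add_four hν, chiCDF_eq]
  set N := chiNormalizer ν
  set I₀ := ∫ t in (0 : ℝ)..x, chiKernel ν t
  set I₁ := ∫ t in (0 : ℝ)..x, t * chiKernel ν t
  set I₂ := ∫ t in (0 : ℝ)..x, t ^ 2 * chiKernel ν t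
  calc ν * ((ν * N)⁻¹ * I₁) ^ 2 = I₁ ^ 2 / (ν * N ^ 2) := by field_simp
    _ < I₀ * I₂ / (ν * N ^ 2) := by gcongr
    _ = (ν + 2) * (((ν + 2) * ν * N)⁻¹ * I₂) * (N⁻¹ * I₀) := by field_simp

theorem Jmat_eq (v : ℕ) (x : ℝ) :
    Jmat v x = (chiCDF (v + 4) x / chiCDF v x) • 1 + of fun _ _ =>
      (chiCDF (v + 4) x / chiCDF v x - chiCDF (v + 2) x ^ 2 / chiCDF v x ^ 2) / 2 := by
  ext k j
  by_cases h : k = j <;> simp [Jmat, one_apply, h] <;> ring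

/-- `J(x)` is invertible; equivalently its determinant is nonzero. -/
theorem Jmat_invertible (v : ℕ) (hv : 1 ≤ v) (x : ℝ) (hx : 0 < x) :
    IsUnit (Jmat v x) ∧ (Jmat v x).det ≠ 0 := by
  have : Nonempty (Fin v) := ⟨⟨0, hv⟩⟩
  have hv₀ : (0 : ℝ) < v := by exact_mod_cast hv
  have hkey := chiCDF_sq_lt hv₀ hx
  have hF₀ := chiCDF_pos hv₀ hx
  have hF₄ := chiCDF_pos (by positivity : (0 : ℝ) < v + 4) hx
  rw [isUnit_iff_isUnit_det, isUnit_iff_ne_zero, and_self, Jmat_eq]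
  set F₀ := chiCDF v x
  set F₂ := chiCDF (v + 2) x
  set F₄ := chiCDF (v + 4) x
  have ha : 0 < F₄ / F₀ := div_pos hF₄ hF₀
  rw [det_smul_one_add_of_const ha.ne', Fintype.card_fin]
  refine mul_ne_zero (pow_ne_zero _ ha.ne') (ne_of_gt ?_)
  calc 0 < ((v + 2) * F₄ * F₀ - v * F₂ ^ 2) / (2 * F₀ ^ 2) := by
        have := sub_pos.2 hkey; positivity
    _ = _ := by field_simp; ring
end

section
/- Let v ≥ 1 be an integer, ρ > 0 and λ̃ > 0. With α and α_k as below, R_k evaluated at the isotropic point λ = (λ̃, …, λ̃) equals F_{v+2}(ρ/λ̃)/F_v(ρ/λ̃) for every k ∈ {1,…,v}. -/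
open Real MeasureTheory

/-- `α(λ) = ∫_{B_v(ρ)} ∏_i (2πλ_i)^{-1/2} exp(−x_i²/(2λ_i)) dx`. -/
noncomputable def alphaInt (v : ℕ) (ρ : ℝ) (lam : Fin v → ℝ) : ℝ :=
  ∫ x in {y : Fin v → ℝ | ∑ i, y i ^ 2 ≤ ρ},
    ∏ i, ((2 * Real.pi * lam i) ^ (-(1 : ℝ) / 2) *
      Real.exp (-(x i ^ 2) / (2 * lam i))) ∂volume

/-- `α_k(λ) = ∫_{B_v(ρ)} (x_k²/λ_k) ∏_i (2πλ_i)^{-1/2} exp(−x_i²/(2λ_i)) dx`. -/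
noncomputable def alphaIntK (v : ℕ) (ρ : ℝ) (k : Fin v) (lam : Fin v → ℝ) : ℝ :=
  ∫ x in {y : Fin v → ℝ | ∑ i, y i ^ 2 ≤ ρ},
    (x k ^ 2 / lam k) * ∏ i, ((2 * Real.pi * lam i) ^ (-(1 : ℝ) / 2) *
      Real.exp (-(x i ^ 2) / (2 * lam i))) ∂volume

/-- `R_k(λ) = α_k(λ)/α(λ)`. -/
noncomputable def Rfun (v : ℕ) (ρ : ℝ) (k : Fin v) (lam : Fin v → ℝ) : ℝ :=
  alphaIntK v ρ k lam / alphaInt v ρ lam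

/-!
At the isotropic point both integrands are radial, `φ(‖x‖²)` with
`φ(s) = (2πλ̃)^{-v/2} e^{-s/(2λ̃)}` (times `s/λ̃` for `Σ_k α_k`). Polar coordinates and the
substitution `t = r²` turn an integral of `φ(‖x‖²)` over the ball `‖x‖² ≤ ρ` into
`π^{v/2}/Γ(v/2) ∫_0^ρ t^{v/2-1} φ(t) dt`, and rescaling `t = λ̃ s` produces exactly the
chi-squared integrals: `α = F_v(ρ/λ̃)` and `Σ_k α_k = v F_{v+2}(ρ/λ̃)`. Permuting coordinates
shows that all `α_k` are equal, so each is `F_{v+2}(ρ/λ̃)`.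
-/

open Set

lemma intervalIntegral_rpow_mul_comp_div {a lam b : ℝ} (hlam : 0 < lam) (hb : 0 ≤ b) (f : ℝ → ℝ) :
    ∫ t in (0 : ℝ)..b, t ^ (a - 1) * f (t / lam) =
      lam ^ a * ∫ s in (0 : ℝ)..b / lam, s ^ (a - 1) * f s := by
  have h_congr : EqOn (fun t => t ^ (a - 1) * f (t / lam))
      (fun t => lam ^ (a - 1) * ((t / lam) ^ (a - 1) * f (t / lam))) (uIcc 0 b) := by
    intro t ht
    rw [uIcc_of_le hb] at ht
    simp only
    rw [← mul_assoc, ← mul_rpow hlam.le (div_nonneg ht.1 hlam.le), mul_div_cancel₀ _ hlam.ne']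
  rw [intervalIntegral.integral_congr h_congr, intervalIntegral.integral_const_mul,
    intervalIntegral.integral_comp_div (fun s => s ^ (a - 1) * f s) hlam.ne', zero_div, smul_eq_mul,
    ← mul_assoc, rpow_sub_one hlam.ne', div_mul_cancel₀ _ hlam.ne']

lemma pi_rpow_mul_rpow_mul_two_pi_mul_rpow_neg (n : ℝ) {lam : ℝ} (hlam : 0 < lam) :
    π ^ (n / 2) * lam ^ (n / 2) * (2 * π * lam) ^ (-n / 2) = (2 ^ (n / 2))⁻¹ := by
  rw [neg_div, rpow_neg (by positivity), mul_rpow (by positivity) hlam.le,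
    mul_rpow zero_le_two pi_pos.le]
  field_simp

section SumOfSquares

variable {ι : Type*} [Fintype ι]

lemma isCompact_setOf_sum_sq_le (ρ : ℝ) : IsCompact {y : ι → ℝ | ∑ i, y i ^ 2 ≤ ρ} := by
  refine (isCompact_univ_pi fun _ => isCompact_Icc (a := -√ρ) (b := √ρ)).of_isClosed_subset
    (isClosed_le (by fun_prop) continuous_const) fun y hy i _ => abs_le.mp (abs_le_sqrt ?_)
  exact (Finset.single_le_sum (fun j _ => sq_nonneg (y j)) (Finset.mem_univ i)).trans hy

lemma measurableSet_setOf_sum_sq_le (ρ : ℝ) : MeasurableSet {y : ι → ℝ | ∑ i, y i ^ 2 ≤ ρ} :=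
  (isCompact_setOf_sum_sq_le ρ).isClosed.measurableSet

lemma setIntegral_sum_sq_le_comp_perm (σ : Equiv.Perm ι) (ρ : ℝ) (f : (ι → ℝ) → ℝ) :
    ∫ x in {y : ι → ℝ | ∑ i, y i ^ 2 ≤ ρ}, f (x ∘ σ) =
      ∫ x in {y : ι → ℝ | ∑ i, y i ^ 2 ≤ ρ}, f x := by
  have hT : ∀ x, MeasurableEquiv.piCongrLeft (fun _ : ι => ℝ) σ.symm x = x ∘ σ := fun x => by
    ext i; simp [MeasurableEquiv.coe_piCongrLeft, Equiv.piCongrLeft_apply]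
  have h_pre : MeasurableEquiv.piCongrLeft (fun _ : ι => ℝ) σ.symm ⁻¹' {y | ∑ i, y i ^ 2 ≤ ρ} =
      {y | ∑ i, y i ^ 2 ≤ ρ} := by
    ext x; simp only [mem_preimage, mem_ofPred_eq, hT, Function.comp_apply,
      Equiv.sum_comp σ (fun i => x i ^ 2)]
  have h := (volume_measurePreserving_piCongrLeft (fun _ : ι => ℝ) σ.symm).setIntegral_preimage_emb
    (MeasurableEquiv.measurableEmbedding _) f {y | ∑ i, y i ^ 2 ≤ ρ}
  rw [h_pre] at h
  simpa only [hT] using h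

lemma prod_const_mul_exp_neg_sq_div (c lam : ℝ) (x : ι → ℝ) :
    ∏ i, (c * exp (-(x i ^ 2) / (2 * lam))) =
      c ^ Fintype.card ι * exp (-(∑ i, x i ^ 2) / (2 * lam)) := by
  rw [Finset.prod_mul_distrib, Finset.prod_const, Finset.card_univ, ← exp_sum, ← Finset.sum_div,
    Finset.sum_neg_distrib]

variable [Nonempty ι]

theorem integral_fun_sum_sq (g : ℝ → ℝ) :
    ∫ x : ι → ℝ, g (∑ i, x i ^ 2) =
      π ^ ((Fintype.card ι : ℝ) / 2) / Gamma ((Fintype.card ι : ℝ) / 2) *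
        ∫ t in Ioi 0, t ^ ((Fintype.card ι : ℝ) / 2 - 1) * g t := by
  set n : ℕ := Fintype.card ι with hn_def
  have hn : 1 ≤ n := Fintype.card_pos
  have h_eucl : ∫ x : ι → ℝ, g (∑ i, x i ^ 2) = ∫ x : EuclideanSpace ℝ ι, g (‖x‖ ^ 2) := by
    simp_rw [EuclideanSpace.real_norm_sq_eq]
    exact ((EuclideanSpace.volume_preserving_symm_measurableEquiv_toLp ι).integral_comp'
      (fun x : ι → ℝ => g (∑ i, x i ^ 2))).symm
  have h_sub : ∫ r in Ioi (0 : ℝ), r ^ (n - 1) • g (r ^ 2) =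
      2⁻¹ * ∫ t in Ioi 0, t ^ ((n : ℝ) / 2 - 1) * g t := by
    rw [← integral_const_mul,
      ← integral_comp_rpow_Ioi_of_pos (g := fun t => 2⁻¹ * (t ^ ((n : ℝ) / 2 - 1) * g t)) two_pos]
    refine setIntegral_congr_fun measurableSet_Ioi fun r (hr : 0 < r) => ?_
    have h_pow : r * (r ^ (2 : ℝ)) ^ ((n : ℝ) / 2 - 1) = r ^ (n - 1) := by
      rw [← rpow_mul hr.le, ← rpow_natCast, Nat.cast_sub hn, Nat.cast_one,
        show (n : ℝ) - 1 = 1 + 2 * ((n : ℝ) / 2 - 1) by ring, rpow_add hr, rpow_one]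
    rw [smul_eq_mul, smul_eq_mul, ← h_pow, rpow_two]
    norm_num
    ring
  have h_ball : (volume (Metric.ball (0 : EuclideanSpace ℝ ι) 1)).toReal =
      π ^ ((n : ℝ) / 2) / ((n / 2) * Gamma (n / 2)) := by
    rw [EuclideanSpace.volume_ball, ← hn_def, ENNReal.ofReal_one, one_pow, one_mul,
      ENNReal.toReal_ofReal (by positivity), sqrt_eq_rpow, ← rpow_natCast, ← rpow_mul pi_pos.le,
      Gamma_add_one (by positivity)]
    ring_nf
  rw [h_eucl, integral_fun_norm_addHaar volume (fun r => g (r ^ 2)), finrank_euclideanSpace,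
    ← hn_def, measureReal_def, h_ball, h_sub, nsmul_eq_mul, smul_eq_mul]
  field_simp

theorem setIntegral_sum_sq_le {ρ : ℝ} (hρ : 0 ≤ ρ) (g : ℝ → ℝ) :
    ∫ x in {y : ι → ℝ | ∑ i, y i ^ 2 ≤ ρ}, g (∑ i, x i ^ 2) =
      π ^ ((Fintype.card ι : ℝ) / 2) / Gamma ((Fintype.card ι : ℝ) / 2) *
        ∫ t in (0 : ℝ)..ρ, t ^ ((Fintype.card ι : ℝ) / 2 - 1) * g t := by
  rw [← integral_indicator (measurableSet_setOf_sum_sq_le ρ)]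
  have h_ind : {y : ι → ℝ | ∑ i, y i ^ 2 ≤ ρ}.indicator (fun x => g (∑ i, x i ^ 2)) =
      fun x => (Iic ρ).indicator g (∑ i, x i ^ 2) := by
    ext x; exact indicator_comp_right (fun y : ι → ℝ => ∑ i, y i ^ 2) (s := Iic ρ) (g := g)
  have h_ind' : (fun t => t ^ ((Fintype.card ι : ℝ) / 2 - 1) * (Iic ρ).indicator g t) =
      (Iic ρ).indicator fun t => t ^ ((Fintype.card ι : ℝ) / 2 - 1) * g t := by
    ext t; exact (indicator_mul_right _ (fun s : ℝ => s ^ _) g).symm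
  rw [h_ind, integral_fun_sum_sq, h_ind', setIntegral_indicator measurableSet_Iic, Ioi_inter_Iic,
    intervalIntegral.integral_of_le hρ]

-- `2 ^ j * Γ(n/2 + j) / Γ(n/2)` is the `j`-th moment of the chi-squared law with `n` degrees
-- of freedom.
theorem setIntegral_sum_sq_le_pow_mul_gaussian {ρ lam : ℝ} (hρ : 0 ≤ ρ) (hlam : 0 < lam) (j : ℕ) :
    ∫ x in {y : ι → ℝ | ∑ i, y i ^ 2 ≤ ρ}, ((∑ i, x i ^ 2) / lam) ^ j *
        ∏ i, ((2 * π * lam) ^ (-(1 : ℝ) / 2) * exp (-(x i ^ 2) / (2 * lam))) =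
      2 ^ j * Gamma ((Fintype.card ι : ℝ) / 2 + j) / Gamma ((Fintype.card ι : ℝ) / 2) *
        chiCDF (Fintype.card ι + 2 * j) (ρ / lam) := by
  set n : ℕ := Fintype.card ι with hn_def
  have hn : (0 : ℝ) < n := by exact_mod_cast Fintype.card_pos
  set c : ℝ := (2 * π * lam) ^ (-(1 : ℝ) / 2)
  have hc : c ^ n = (2 * π * lam) ^ (-(n : ℝ) / 2) := by
    rw [← rpow_natCast, ← rpow_mul (by positivity)]; ring_nf
  simp_rw [prod_const_mul_exp_neg_sq_div, ← hn_def]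
  have h_scale : ∫ t in (0 : ℝ)..ρ,
        t ^ ((n : ℝ) / 2 - 1) * ((t / lam) ^ j * (c ^ n * exp (-t / (2 * lam)))) =
      lam ^ ((n : ℝ) / 2) *
        ∫ s in (0 : ℝ)..ρ / lam, s ^ ((n : ℝ) / 2 - 1) * (s ^ j * (c ^ n * exp (-s / 2))) := by
    rw [← intervalIntegral_rpow_mul_comp_div hlam hρ]
    congr! 6 with t
    ring
  have h_merge : ∫ s in (0 : ℝ)..ρ / lam, s ^ ((n : ℝ) / 2 - 1) * (s ^ j * (c ^ n * exp (-s / 2))) =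
      c ^ n * ∫ s in (0 : ℝ)..ρ / lam, s ^ (((n : ℝ) + 2 * j) / 2 - 1) * exp (-s / 2) := by
    rw [← intervalIntegral.integral_const_mul]
    refine intervalIntegral.integral_congr_ae (Filter.Eventually.of_forall fun s hs => ?_)
    rw [uIoc_of_le (div_nonneg hρ hlam.le)] at hs
    rw [show ((n : ℝ) + 2 * j) / 2 - 1 = (n : ℝ) / 2 - 1 + j by ring,
      rpow_add_natCast hs.1.ne']
    ring
  rw [setIntegral_sum_sq_le hρ (fun s => (s / lam) ^ j * (c ^ n * exp (-s / (2 * lam)))), ← hn_def,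
    h_scale, h_merge, chiCDF, hc,
    show ((n : ℝ) + 2 * j) / 2 = n / 2 + j by ring, rpow_add_natCast two_ne_zero,
    ← mul_assoc, ← mul_assoc, div_mul_eq_mul_div, div_mul_eq_mul_div,
    pi_rpow_mul_rpow_mul_two_pi_mul_rpow_neg n hlam]
  have := Gamma_pos_of_pos (by positivity : (0 : ℝ) < n / 2)
  have := Gamma_pos_of_pos (by positivity : (0 : ℝ) < n / 2 + j)
  field_simp

end SumOfSquares

section Isotropic

variable {v : ℕ} {ρ lam : ℝ}

lemma alphaInt_const (hv : 1 ≤ v) (hρ : 0 ≤ ρ) (hlam : 0 < lam) :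
    alphaInt v ρ (fun _ => lam) = chiCDF v (ρ / lam) := by
  have : Nonempty (Fin v) := ⟨⟨0, hv⟩⟩
  have h := setIntegral_sum_sq_le_pow_mul_gaussian (ι := Fin v) hρ hlam 0
  have hΓ := (Gamma_pos_of_pos (by positivity : (0 : ℝ) < v / 2)).ne'
  rw [alphaInt]
  simpa [hΓ] using h

lemma alphaIntK_const_eq_alphaIntK_const (j k : Fin v) :
    alphaIntK v ρ j (fun _ => lam) = alphaIntK v ρ k (fun _ => lam) := by
  rw [alphaIntK, alphaIntK, ← setIntegral_sum_sq_le_comp_perm (Equiv.swap j k)]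
  refine setIntegral_congr_fun (measurableSet_setOf_sum_sq_le ρ) fun x _ => ?_
  simp only [Function.comp_apply, Equiv.swap_apply_left]
  rw [Equiv.prod_comp (Equiv.swap j k)
    fun i => (2 * π * lam) ^ (-(1 : ℝ) / 2) * exp (-x i ^ 2 / (2 * lam))]

lemma alphaIntK_const (hv : 1 ≤ v) (hρ : 0 ≤ ρ) (hlam : 0 < lam) (k : Fin v) :
    alphaIntK v ρ k (fun _ => lam) = chiCDF (v + 2) (ρ / lam) := by
  have : Nonempty (Fin v) := ⟨⟨0, hv⟩⟩
  have hv' : (0 : ℝ) < v := by exact_mod_cast hv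
  have h_int : ∀ j : Fin v, IntegrableOn (fun x : Fin v → ℝ => x j ^ 2 / lam *
      ∏ i, ((2 * π * lam) ^ (-(1 : ℝ) / 2) * exp (-(x i ^ 2) / (2 * lam))))
      {y : Fin v → ℝ | ∑ i, y i ^ 2 ≤ ρ} := fun j =>
    (Continuous.continuousOn (by fun_prop)).integrableOn_compact (isCompact_setOf_sum_sq_le ρ)
  have h_sum : ∑ j, alphaIntK v ρ j (fun _ => lam) = v * chiCDF (v + 2) (ρ / lam) := by
    have h := setIntegral_sum_sq_le_pow_mul_gaussian (ι := Fin v) hρ hlam 1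
    simp only [pow_one, Finset.sum_div, Finset.sum_mul, Fintype.card_fin, Nat.cast_one, mul_one,
      Gamma_add_one (by positivity : (v : ℝ) / 2 ≠ 0)] at h
    simp only [alphaIntK]
    rw [← integral_finsetSum _ fun j _ => h_int j, h]
    field_simp
  rw [Finset.sum_congr rfl fun j _ => alphaIntK_const_eq_alphaIntK_const (ρ := ρ) (lam := lam) j k,
    Finset.sum_const, Finset.card_univ, Fintype.card_fin, nsmul_eq_mul] at h_sum
  exact mul_left_cancel₀ hv'.ne' h_sum

end Isotropic

/-- At the isotropic point `λ = (λ̃,…,λ̃)`, `R_k = F_{v+2}(ρ/λ̃)/F_v(ρ/λ̃)`. -/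
theorem Rfun_isotropic (v : ℕ) (hv : 1 ≤ v) (ρ lamt : ℝ) (hρ : 0 < ρ)
    (hl : 0 < lamt) (k : Fin v) :
    Rfun v ρ k (fun _ => lamt) = chiCDF (v + 2) (ρ / lamt) / chiCDF v (ρ / lamt) := by
  rw [Rfun, alphaIntK_const hv hρ.le hl, alphaInt_const hv hρ.le hl]
end
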